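/- Let k ∈ ℕ, let S_1, …, S_m (m ≥ 1) be binary strings of length ℓ ≥ 1, let T = γ(S_1)·γ(S_2)⋯γ(S_m) and c = (4k+12)ℓ + 2k+4 = |γ(S_1)|. If C is a k-approximate cover of T under the Hamming distance with |C| = c, then the binary string S = ψ(C) satisfies Ham(S, S_i) ≤ k for all i = 1, …, m. -/

import Mathlib

/-! The occurrence of `C` covering position `0` of `T` must start at `0`, so `C` is within `k` of
`γ(S₁)`. Take the occurrence covering the first letter of `γ(Sᵢ)`. If it starts exactly there,
comparing `C` with `γ(Sᵢ)` at the positions `(j+1)(4k+12) - 1`, which carry the letters of `Sᵢ`,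
gives `Ham(ψ(C), Sᵢ) ≤ k`. Otherwise it starts at a position that is not a multiple of `|γ(S₁)|`,
and by the triangle inequality the window of `T` there is within `2k` of `γ(S₁)`, of which it is
a shift. A shift by fewer than `2k+4` letters breaks the pattern `1010` of each of the `ℓ` blocks
in two places, so `ℓ ≤ k` and `Ham(ψ(C), Sᵢ) ≤ ℓ ≤ k` trivially. A larger shift places each of
the two runs `1^{2k+4}` against a stretch of `φ(·)` with at most three `1`s, giving at least
`4k+2 > 2k` mismatches, which is impossible. -/

/-- Hamming distance between two (equal-length) strings:
the number of positions where they differ. -/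
def ham : List Bool → List Bool → ℕ
  | x :: U, y :: V => (if x = y then 0 else 1) + ham U V
  | _, _ => 0

/-- The morphism `φ`: `φ(0) = 0^{2k+4} 1010 0^{2k+4}` and `φ(1) = 0^{2k+4} 1011 0^{2k+4}`,
with `0 ↦ false`, `1 ↦ true`. -/
def phi (k : ℕ) (S : List Bool) : List Bool :=
  S.flatMap fun x =>
    List.replicate (2 * k + 4) false ++ [true, false, true, x] ++
      List.replicate (2 * k + 4) false

/-- `γ(S) = 1^{2k+4} · φ(S)`. -/
def gamma (k : ℕ) (S : List Bool) : List Bool :=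
  List.replicate (2 * k + 4) true ++ phi k S

/-- `ψ(U)`: the binary string of length `ℓ` whose `j`-th letter is `U[(j+1)(4k+12) - 1]`. -/
def psi (k ℓ : ℕ) (U : List Bool) : List Bool :=
  (List.range ℓ).map fun j => U.getD ((j + 1) * (4 * k + 12) - 1) false

/-- `C` is a `k`-approximate cover of `T` under the Hamming distance: `|C| < |T|` and every
position `t` of `T` is covered by a `k`-approximate occurrence of `C` in `T`. -/
def IsApproxCover (k : ℕ) (C T : List Bool) : Prop :=
  C.length < T.length ∧
    ∀ t < T.length, ∃ i, i + C.length ≤ T.length ∧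
      ham C ((T.drop i).take C.length) ≤ k ∧ i ≤ t ∧ t < i + C.length

open Finset

theorem List.getD_flatten_mul_add {α : Type*} (L : List (List α)) {n r : ℕ}
    (hL : ∀ l ∈ L, l.length = n) (hr : r < n) (q : ℕ) (d : α) :
    L.flatten.getD (q * n + r) d = (L.getD q []).getD r d := by
  induction L generalizing q with
  | nil => simp
  | cons l L ih =>
    rw [List.flatten_cons]
    cases q with
    | zero => rw [zero_mul, zero_add, List.getD_append _ _ _ _ (by rwa [hL l (by simp)])]; rfl
    | succ q =>
      rw [List.getD_append_right _ _ _ _ (by rw [hL l (by simp)]; nlinarith), hL l (by simp),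
        show (q + 1) * n + r - n = q * n + r by rw [add_mul]; omega,
        ih (fun l' hl' => hL l' (by simp [hl'])) q]
      rfl

theorem Nat.eq_and_eq_of_mul_add_eq {M j j' v v' : ℕ} (hv : v < M) (hv' : v' < M)
    (h : j * M + v = j' * M + v') : j = j' ∧ v = v' := by
  have hM : 0 < M := by omega
  obtain ⟨hj, hvmod⟩ := (Nat.div_mod_unique (a := j * M + v) (d := j) (c := v) hM).mpr
    ⟨by ring, hv⟩
  obtain ⟨hj', hvmod'⟩ := (Nat.div_mod_unique (a := j' * M + v') (d := j') (c := v') hM).mpr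
    ⟨by ring, hv'⟩
  rw [h] at hj hvmod
  exact ⟨hj.symm.trans hj', hvmod.symm.trans hvmod'⟩

theorem Nat.eq_mul_of_dvd_of_le_of_lt {b c i : ℕ} (hci : c ∣ i) (hi : i ≤ b * c)
    (hi' : b * c < i + c) : i = b * c := by
  obtain ⟨q, rfl⟩ := hci
  rcases lt_trichotomy q b with hqb | rfl | hbq
  · nlinarith
  · ring
  · nlinarith

def mismatches (f g : ℕ → Bool) (s : Finset ℕ) : Finset ℕ :=
  {p ∈ s | f p ≠ g p}

section Mismatches

variable {f g h f' g' : ℕ → Bool} {s t : Finset ℕ}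

theorem mismatches_comm : mismatches f g s = mismatches g f s := by
  simp only [mismatches, ne_comm]

theorem mismatches_congr (hf : ∀ p ∈ s, f p = f' p) (hg : ∀ p ∈ s, g p = g' p) :
    mismatches f g s = mismatches f' g' s :=
  filter_congr fun p hp => by rw [hf p hp, hg p hp]

theorem mismatches_mono (hst : s ⊆ t) : mismatches f g s ⊆ mismatches f g t :=
  filter_subset_filter _ hst

theorem card_mismatches_le_add :
    #(mismatches f h s) ≤ #(mismatches f g s) + #(mismatches g h s) := by
  refine (card_le_card fun p hp => ?_).trans (card_union_le _ _)
  simp only [mismatches, mem_union, mem_filter] at hp ⊢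
  by_cases hfg : f p = g p
  · exact .inr ⟨hp.1, hfg ▸ hp.2⟩
  · exact .inl ⟨hp.1, hfg⟩

theorem card_le_card_mismatches_add (hf : ∀ p ∈ s, f p = true) :
    #s ≤ #(mismatches f g s) + #{p ∈ s | g p} := by
  refine (card_le_card fun p hp => ?_).trans (card_union_le _ _)
  simp only [mismatches, mem_union, mem_filter]
  cases hg : g p <;> simp [hp, hf p hp]

end Mismatches

theorem ham_le_length (U V : List Bool) : ham U V ≤ U.length := by
  induction U generalizing V with
  | nil => exact Nat.zero_le _
  | cons x U ih =>
    cases V with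
    | nil => exact Nat.zero_le _
    | cons y V =>
      rw [ham, List.length_cons, add_comm]
      exact add_le_add (ih V) (by split_ifs <;> simp)

theorem ham_eq_card_mismatches (U V : List Bool) (h : U.length = V.length) :
    ham U V = #(mismatches (U.getD · false) (V.getD · false) (range U.length)) := by
  induction U generalizing V with
  | nil => rfl
  | cons x U ih =>
    cases V with
    | nil => simp at h
    | cons y V =>
      rw [ham, ih V (by simpa using h), mismatches, mismatches, card_filter, card_filter,
        List.length_cons, sum_range_succ']
      simp only [List.getD_cons_zero, List.getD_cons_succ]
      by_cases hxy : x = y <;> simp [hxy, add_comm]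

theorem ham_take_drop_eq_card_mismatches (C T : List Bool) (i : ℕ) (hi : i + C.length ≤ T.length) :
    ham C ((T.drop i).take C.length) =
      #(mismatches (C.getD · false) (fun p => T.getD (i + p) false) (range C.length)) := by
  rw [ham_eq_card_mismatches _ _ (by simp; omega)]
  refine congrArg card (mismatches_congr (fun _ _ => rfl) fun p hp => ?_)
  simp [List.getD_eq_getElem?_getD, mem_range.mp hp]

def block (k : ℕ) (x : Bool) : List Bool :=
  List.replicate (2 * k + 4) false ++ [true, false, true, x] ++ List.replicate (2 * k + 4) false

section Encoding

variable (k : ℕ)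

theorem phi_eq_flatten_map_block (S : List Bool) : phi k S = (S.map (block k)).flatten := rfl

theorem length_block (x : Bool) : (block k x).length = 4 * k + 12 := by
  simp [block]; omega

theorem getD_block (x : Bool) (o : ℕ) :
    (block k x).getD o false =
      if o = 2 * k + 4 ∨ o = 2 * k + 6 then true else if o = 2 * k + 7 then x else false := by
  simp only [block, List.getD_eq_getElem?_getD, List.getElem?_append, List.getElem?_replicate,
    List.length_append, List.length_replicate, List.length_cons, List.length_nil]
  split_ifs <;> try simp only [Option.getD_some, Option.getD_none]
  all_goals try omega
  all_goals
    obtain ⟨i, hi, rfl⟩ : ∃ i < 4, o = 2 * k + 4 + i := ⟨o - (2 * k + 4), by omega, by omega⟩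
    rw [Nat.add_sub_cancel_left]
    interval_cases i <;> simp <;> omega

theorem length_phi (S : List Bool) : (phi k S).length = (4 * k + 12) * S.length := by
  rw [phi_eq_flatten_map_block, List.length_flatten, List.map_map]
  simp [Function.comp_def, length_block, mul_comm]

theorem length_gamma (S : List Bool) :
    (gamma k S).length = (4 * k + 12) * S.length + 2 * k + 4 := by
  simp [gamma, length_phi]; omega

theorem getD_gamma_of_lt (S : List Bool) {r : ℕ} (hr : r < 2 * k + 4) :
    (gamma k S).getD r false = true := by
  rw [gamma, List.getD_append _ _ _ _ (by simpa), List.getD_replicate true hr]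

theorem getD_gamma_add (S : List Bool) (r : ℕ) :
    (gamma k S).getD (2 * k + 4 + r) false = (phi k S).getD r false := by
  rw [gamma, List.getD_append_right _ _ _ _ (by simp)]
  simp

theorem getD_phi_mul_add (S : List Bool) {j o : ℕ} (hj : j < S.length) (ho : o < 4 * k + 12) :
    (phi k S).getD (j * (4 * k + 12) + o) false = (block k (S.getD j false)).getD o false := by
  have hblocks : ∀ l ∈ S.map (block k), l.length = 4 * k + 12 := by
    rintro l hl
    obtain ⟨x, -, rfl⟩ := List.mem_map.mp hl
    exact length_block k x
  rw [phi_eq_flatten_map_block, List.getD_flatten_mul_add _ hblocks ho,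
    List.getD_eq_getElem (S.map (block k)) [] (by simpa), List.getElem_map,
    List.getD_eq_getElem _ _ hj]

theorem getD_gamma_block (S : List Bool) {j o : ℕ} (hj : j < S.length) (ho : o < 4 * k + 12) :
    (gamma k S).getD (2 * k + 4 + (j * (4 * k + 12) + o)) false =
      (block k (S.getD j false)).getD o false := by
  rw [getD_gamma_add, getD_phi_mul_add k S hj ho]

theorem exists_card_eq_two_getD_block_ne_shift {d : ℕ} (hd : 1 ≤ d) (hd' : d ≤ 2 * k + 3) :
    ∃ V : Finset ℕ, #V = 2 ∧ ∀ v ∈ V, d ≤ v ∧ v < 4 * k + 12 ∧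
      ∀ x y, (block k x).getD v false ≠ (block k y).getD (v - d) false := by
  -- The first `1` of `1010` always meets a `0` of the shifted block; the second one does too
  -- unless `d = 2`, in which case the `0` at offset `2k+8` meets it.
  refine ⟨{2 * k + 4, if d = 2 then 2 * k + 8 else 2 * k + 6}, card_pair (by split_ifs <;> omega),
    ?_⟩
  simp only [mem_insert, mem_singleton]
  rintro v (rfl | rfl) <;>
    refine ⟨by (try split_ifs) <;> omega, by (try split_ifs) <;> omega, fun x y => ?_⟩
  all_goals simp only [getD_block]; split_ifs <;> simp_all <;> omega

theorem mod_eq_of_getD_gamma_add {S : List Bool} {r : ℕ}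
    (h : (gamma k S).getD (2 * k + 4 + r) false = true) :
    r % (4 * k + 12) = 2 * k + 4 ∨ r % (4 * k + 12) = 2 * k + 6 ∨ r % (4 * k + 12) = 2 * k + 7 := by
  have hr : r = r / (4 * k + 12) * (4 * k + 12) + r % (4 * k + 12) := (Nat.div_add_mod' _ _).symm
  have ho : r % (4 * k + 12) < 4 * k + 12 := Nat.mod_lt _ (by omega)
  by_cases hj : r / (4 * k + 12) < S.length
  · rw [hr, getD_gamma_block k S hj ho, getD_block] at h
    split_ifs at h <;> omega
  · have hlen : S.length * (4 * k + 12) ≤ r / (4 * k + 12) * (4 * k + 12) :=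
      Nat.mul_le_mul_right _ (not_lt.mp hj)
    rw [List.getD_eq_default _ _ (by rw [length_gamma, mul_comm]; omega)] at h
    exact absurd h Bool.false_ne_true

theorem card_filter_getD_gamma_le_three (S : List Bool) {u : ℕ} (hu : 2 * k + 4 ≤ u) :
    #{p ∈ Ico u (u + (2 * k + 4)) | (gamma k S).getD p false} ≤ 3 := by
  refine (card_le_card_of_injOn (fun p => (p - (2 * k + 4)) % (4 * k + 12))
    (t := {2 * k + 4, 2 * k + 6, 2 * k + 7}) ?_ ?_).trans card_le_three
  · intro p hp
    simp only [coe_filter, mem_Ico, Set.mem_ofPred_eq] at hp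
    have h := mod_eq_of_getD_gamma_add k (r := p - (2 * k + 4)) (by rw [← hp.2]; congr; omega)
    simpa using h
  · intro p hp p' hp' hpp'
    simp only [coe_filter, mem_Ico, Set.mem_ofPred_eq] at hp hp'
    have := Nat.mod_injOn_Ico (u - (2 * k + 4)) (4 * k + 12)
      (by simp; omega : p - (2 * k + 4) ∈ _) (by simp; omega : p' - (2 * k + 4) ∈ _) hpp'
    omega

end Encoding

theorem le_card_mismatches_of_shift_large {k c : ℕ} {S₀ S S' : List Bool} {W : ℕ → Bool} {d e : ℕ}
    (hde : d + e = c) (hd : 2 * k + 4 ≤ d) (he : 2 * k + 4 ≤ e)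
    (hW₁ : ∀ p, e + p < c → W p = (gamma k S').getD (e + p) false)
    (hW₂ : ∀ r, d + r < c → W (d + r) = (gamma k S).getD r false) :
    4 * k + 2 ≤ #(mismatches (fun p => (gamma k S₀).getD p false) W (range c)) := by
  set f := fun p => (gamma k S₀).getD p false
  have hA := card_le_card_mismatches_add (f := f) (g := W) (s := range (2 * k + 4))
    fun p hp => getD_gamma_of_lt k S₀ (mem_range.mp hp)
  have hA₃ : #{p ∈ range (2 * k + 4) | W p} ≤ 3 := by
    refine (card_le_card_of_injOn (e + ·) (fun p hp => ?_) (add_right_injective e).injOn).trans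
      (card_filter_getD_gamma_le_three k S' he)
    simp only [coe_filter, mem_range, Set.mem_ofPred_eq] at hp
    simp only [coe_filter, mem_Ico, Set.mem_ofPred_eq]
    exact ⟨by omega, by rw [← hW₁ p (by omega), hp.2]⟩
  have hB := card_le_card_mismatches_add (f := W) (g := f) (s := Ico d (d + (2 * k + 4)))
    fun p hp => by
      have hp := mem_Ico.mp hp
      rw [show p = d + (p - d) by omega, hW₂ _ (by omega), getD_gamma_of_lt k S (by omega)]
  have hB₃ : #{p ∈ Ico d (d + (2 * k + 4)) | f p} ≤ 3 := card_filter_getD_gamma_le_three k S₀ hd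
  rw [mismatches_comm] at hB
  rw [card_range] at hA
  rw [Nat.card_Ico] at hB
  have hdisj : Disjoint (mismatches f W (range (2 * k + 4)))
      (mismatches f W (Ico d (d + (2 * k + 4)))) :=
    disjoint_filter_filter (disjoint_left.mpr fun p hp hp' => by
      simp only [mem_range, mem_Ico] at hp hp'; omega)
  calc 4 * k + 2
      ≤ #(mismatches f W (range (2 * k + 4))) + #(mismatches f W (Ico d (d + (2 * k + 4)))) := by
        omega
    _ = #(mismatches f W (range (2 * k + 4)) ∪ mismatches f W (Ico d (d + (2 * k + 4)))) :=
        (card_union_of_disjoint hdisj).symm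
    _ ≤ _ := card_le_card (union_subset (mismatches_mono fun p hp => by simp at hp ⊢; omega)
        (mismatches_mono fun p hp => by simp at hp ⊢; omega))

section Shifts

variable {k ℓ c : ℕ} (hc : c = (4 * k + 12) * ℓ + 2 * k + 4)
include hc

theorem two_mul_le_card_filter_getD_gamma_ne_shift {A B : List Bool} (hA : A.length = ℓ)
    (hB : B.length = ℓ) {d : ℕ} (hd : 1 ≤ d) (hd' : d ≤ 2 * k + 3) :
    2 * ℓ ≤ #{p ∈ Ico d c | (gamma k A).getD p false ≠ (gamma k B).getD (p - d) false} := by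
  obtain ⟨V, hV, hVmem⟩ := exists_card_eq_two_getD_block_ne_shift k hd hd'
  calc 2 * ℓ = #(range ℓ ×ˢ V) := by rw [card_product, card_range, hV, mul_comm]
    _ ≤ _ := card_le_card_of_injOn (fun jv => 2 * k + 4 + (jv.1 * (4 * k + 12) + jv.2)) ?_ ?_
  · rintro ⟨j, v⟩ hjv
    simp only [coe_product, coe_range, Set.mem_prod, Set.mem_Iio, mem_coe] at hjv
    obtain ⟨hj, hv⟩ := hjv
    obtain ⟨hdv, hvM, hne⟩ := hVmem v hv
    have hjℓ : (j + 1) * (4 * k + 12) ≤ ℓ * (4 * k + 12) := Nat.mul_le_mul_right _ hj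
    simp only [coe_filter, mem_Ico, Set.mem_ofPred_eq]
    refine ⟨⟨by omega, by rw [hc, add_mul] at *; linarith⟩, ?_⟩
    rw [show 2 * k + 4 + (j * (4 * k + 12) + v) - d = 2 * k + 4 + (j * (4 * k + 12) + (v - d))
      by omega, getD_gamma_block k A (hA ▸ hj) hvM, getD_gamma_block k B (hB ▸ hj) (by omega)]
    exact hne _ _
  · rintro ⟨j, v⟩ hjv ⟨j', v'⟩ hjv' h
    simp only [coe_product, coe_range, Set.mem_prod, Set.mem_Iio, mem_coe] at hjv hjv'
    obtain ⟨rfl, rfl⟩ := Nat.eq_and_eq_of_mul_add_eq (hVmem v hjv.2).2.1 (hVmem v' hjv'.2).2.1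
      (Nat.add_left_cancel h)
    rfl

theorem two_mul_le_card_mismatches_of_shift_right {S₀ S : List Bool} (hS₀ : S₀.length = ℓ)
    (hS : S.length = ℓ) {W : ℕ → Bool} {d : ℕ} (hd : 1 ≤ d) (hd' : d ≤ 2 * k + 3)
    (hW : ∀ r, d + r < c → W (d + r) = (gamma k S).getD r false) :
    2 * ℓ ≤ #(mismatches (fun p => (gamma k S₀).getD p false) W (range c)) := by
  refine (two_mul_le_card_filter_getD_gamma_ne_shift hc hS₀ hS hd hd').trans
    (card_le_card fun p hp => ?_)
  simp only [mem_filter, mem_Ico] at hp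
  obtain ⟨⟨hdp, hpc⟩, hne⟩ := hp
  simp only [mismatches, mem_filter, mem_range]
  refine ⟨hpc, ?_⟩
  have hWp := hW (p - d) (by omega)
  rw [Nat.add_sub_cancel' hdp] at hWp
  rwa [hWp]

theorem two_mul_le_card_mismatches_of_shift_left {S₀ S' : List Bool} (hS₀ : S₀.length = ℓ)
    (hS' : S'.length = ℓ) {W : ℕ → Bool} {e : ℕ} (he : 1 ≤ e) (he' : e ≤ 2 * k + 3)
    (hW : ∀ p, e + p < c → W p = (gamma k S').getD (e + p) false) :
    2 * ℓ ≤ #(mismatches (fun p => (gamma k S₀).getD p false) W (range c)) := by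
  refine (two_mul_le_card_filter_getD_gamma_ne_shift hc hS' hS₀ he he').trans
    (card_le_card_of_injOn (· - e) (fun p hp => ?_) (fun p hp p' hp' h => ?_))
  · simp only [coe_filter, mem_Ico, Set.mem_ofPred_eq] at hp
    obtain ⟨⟨hep, hpc⟩, hne⟩ := hp
    simp only [mismatches, coe_filter, mem_range, Set.mem_ofPred_eq]
    refine ⟨by omega, ?_⟩
    rw [hW _ (by omega), Nat.add_sub_cancel' hep]
    exact Ne.symm hne
  · simp only [coe_filter, mem_Ico, Set.mem_ofPred_eq] at hp hp'
    simp only at h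
    omega

theorem min_le_card_mismatches_of_shift {S₀ S S' : List Bool} (hS₀ : S₀.length = ℓ)
    (hS : S.length = ℓ) (hS' : S'.length = ℓ)
    {W : ℕ → Bool} {d e : ℕ} (hde : d + e = c) (hd : 1 ≤ d) (he : 1 ≤ e)
    (hW₁ : ∀ p, e + p < c → W p = (gamma k S').getD (e + p) false)
    (hW₂ : ∀ r, d + r < c → W (d + r) = (gamma k S).getD r false) :
    min (2 * ℓ) (4 * k + 2) ≤ #(mismatches (fun p => (gamma k S₀).getD p false) W (range c)) := by
  rcases (by omega : d ≤ 2 * k + 3 ∨ e ≤ 2 * k + 3 ∨ (2 * k + 4 ≤ d ∧ 2 * k + 4 ≤ e))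
    with hd' | he' | ⟨hd', he'⟩
  · exact (min_le_left _ _).trans
      (two_mul_le_card_mismatches_of_shift_right hc hS₀ hS hd hd' hW₂)
  · exact (min_le_left _ _).trans
      (two_mul_le_card_mismatches_of_shift_left hc hS₀ hS' he he' hW₁)
  · exact (min_le_right _ _).trans (le_card_mismatches_of_shift_large hde hd' he' hW₁ hW₂)

end Shifts

theorem ham_psi_le_card_mismatches {k ℓ c : ℕ} (hc : c = (4 * k + 12) * ℓ + 2 * k + 4)
    {S : List Bool} (hS : S.length = ℓ) (C : List Bool) :
    ham (psi k ℓ C) S ≤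
      #(mismatches (C.getD · false) ((gamma k S).getD · false) (range c)) := by
  have hψ : (psi k ℓ C).length = ℓ := by simp [psi]
  rw [ham_eq_card_mismatches _ _ (by rw [hψ, hS]), hψ]
  refine card_le_card_of_injOn (fun j => 2 * k + 4 + (j * (4 * k + 12) + (2 * k + 7)))
    (fun j hj => ?_) (fun j _ j' _ h => ?_)
  · simp only [mismatches, coe_filter, mem_range, Set.mem_ofPred_eq] at hj ⊢
    obtain ⟨hj, hne⟩ := hj
    have hjℓ : (j + 1) * (4 * k + 12) ≤ ℓ * (4 * k + 12) := Nat.mul_le_mul_right _ hj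
    have hpos : (j + 1) * (4 * k + 12) - 1 = 2 * k + 4 + (j * (4 * k + 12) + (2 * k + 7)) := by
      rw [add_mul]; omega
    refine ⟨by rw [hc, add_mul] at *; linarith, ?_⟩
    rw [getD_gamma_block k S (hS ▸ hj) (by omega), getD_block, ← hpos]
    simpa [psi, List.getD_eq_getElem?_getD, hj] using hne
  · exact (Nat.eq_and_eq_of_mul_add_eq (M := 4 * k + 12) (by omega) (by omega)
      (Nat.add_left_cancel h)).1

section Text

variable {k ℓ c : ℕ} {Ss : List (List Bool)} (hlen : ∀ S ∈ Ss, S.length = ℓ)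
  (hc : c = (4 * k + 12) * ℓ + 2 * k + 4)
include hlen hc

theorem length_flatten_map_gamma : ((Ss.map (gamma k)).flatten).length = Ss.length * c := by
  rw [List.length_flatten, List.map_map,
    List.map_congr_left fun S hS => by rw [Function.comp_apply, length_gamma, hlen S hS, ← hc],
    List.map_const', List.sum_replicate, smul_eq_mul]

theorem getD_flatten_map_gamma {q r : ℕ} (hq : q < Ss.length) (hr : r < c) :
    ((Ss.map (gamma k)).flatten).getD (q * c + r) false = (gamma k Ss[q]).getD r false := by
  have hblocks : ∀ l ∈ Ss.map (gamma k), l.length = c := by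
    rintro l hl
    obtain ⟨S, hS, rfl⟩ := List.mem_map.mp hl
    rw [length_gamma, hlen S hS, hc]
  rw [List.getD_flatten_mul_add _ hblocks hr, List.getD_eq_getElem (Ss.map (gamma k)) [] (by simpa),
    List.getElem_map]

theorem min_le_card_mismatches_window {i : ℕ} (hi : i + c ≤ ((Ss.map (gamma k)).flatten).length)
    (hci : ¬ c ∣ i) :
    min (2 * ℓ) (4 * k + 2) ≤ #(mismatches (fun p => ((Ss.map (gamma k)).flatten).getD p false)
      (fun p => ((Ss.map (gamma k)).flatten).getD (i + p) false) (range c)) := by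
  set T := (Ss.map (gamma k)).flatten
  have hc₀ : 0 < c := by omega
  obtain ⟨q, e, rfl, he, hec⟩ : ∃ q e, i = q * c + e ∧ 0 < e ∧ e < c :=
    ⟨i / c, i % c, (Nat.div_add_mod' i c).symm,
      Nat.pos_of_ne_zero fun h => hci (Nat.dvd_of_mod_eq_zero h), Nat.mod_lt i hc₀⟩
  have hq : q + 1 < Ss.length := by
    rw [length_flatten_map_gamma hlen hc] at hi
    refine Nat.lt_of_mul_lt_mul_right (a := c) ?_
    rw [add_mul]
    omega
  rw [mismatches_congr (f' := fun p => (gamma k (Ss[0]'(by omega))).getD p false)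
    (g' := fun p => T.getD (q * c + e + p) false)
    (fun p hp => by
      simpa using getD_flatten_map_gamma hlen hc (q := 0) (by omega) (mem_range.mp hp))
    fun _ _ => rfl]
  refine min_le_card_mismatches_of_shift hc (hlen _ (List.getElem_mem _))
    (hlen _ (List.getElem_mem hq)) (hlen _ (List.getElem_mem (by omega : q < Ss.length)))
    (d := c - e) (e := e) (by omega) (by omega) he (fun p hp => ?_) (fun r hr => ?_)
  · rw [← getD_flatten_map_gamma hlen hc (by omega) hp, add_assoc]
  · rw [← getD_flatten_map_gamma hlen hc hq (by omega), add_mul]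
    congr 1
    omega

theorem ham_psi_le_card_mismatches_window {q : ℕ} (hq : q < Ss.length) (C : List Bool) :
    ham (psi k ℓ C) Ss[q] ≤ #(mismatches (C.getD · false)
      (fun p => ((Ss.map (gamma k)).flatten).getD (q * c + p) false) (range c)) :=
  (ham_psi_le_card_mismatches hc (hlen _ (List.getElem_mem hq)) C).trans_eq <|
    congrArg card <| mismatches_congr (fun _ _ => rfl) fun _ hr =>
      (getD_flatten_map_gamma hlen hc hq (mem_range.mp hr)).symm

end Text

theorem IsApproxCover.exists_card_mismatches_le {k : ℕ} {C T : List Bool}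
    (h : IsApproxCover k C T) {t : ℕ} (ht : t < T.length) :
    ∃ i ≤ t, t < i + C.length ∧ i + C.length ≤ T.length ∧
      #(mismatches (C.getD · false) (fun p => T.getD (i + p) false) (range C.length)) ≤ k := by
  obtain ⟨i, hiT, hham, hit, hti⟩ := h.2 t ht
  exact ⟨i, hit, hti, hiT, ham_take_drop_eq_card_mismatches C T i hiT ▸ hham⟩

theorem stmt7_general (k ℓ : ℕ)
    (Ss : List (List Bool))
    (hlen : ∀ Si ∈ Ss, Si.length = ℓ)
    (T : List Bool) (hT : T = (Ss.map (gamma k)).flatten)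
    (c : ℕ) (hc : c = (4 * k + 12) * ℓ + 2 * k + 4)
    (C : List Bool) (hC : C.length = c)
    (hcov : IsApproxCover k C T) :
    ∀ Si ∈ Ss, ham (psi k ℓ C) Si ≤ k := by
  intro Si hSi
  obtain ⟨b, hb, rfl⟩ := List.getElem_of_mem hSi
  subst hT
  have hTlen := length_flatten_map_gamma hlen hc
  have hbc : (b + 1) * c ≤ Ss.length * c := Nat.mul_le_mul_right c hb
  rw [add_mul] at hbc
  obtain ⟨i₀, hi₀, -, -, h₀⟩ := hcov.exists_card_mismatches_le (t := 0) (by omega)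
  obtain ⟨i, hib, hbi, hiT, h⟩ := hcov.exists_card_mismatches_le (t := b * c) (by omega)
  rw [hC] at h₀ h hbi hiT
  obtain rfl : i₀ = 0 := Nat.le_zero.mp hi₀
  simp only [zero_add] at h₀
  by_cases hci : c ∣ i
  · obtain rfl := Nat.eq_mul_of_dvd_of_le_of_lt hci hib hbi
    exact (ham_psi_le_card_mismatches_window hlen hc hb C).trans h
  · have h2k := (card_mismatches_le_add (g := (C.getD · false))).trans
      (add_le_add (mismatches_comm (f := (C.getD · false)) ▸ h₀) h)
    have hwindow := min_le_card_mismatches_window hlen hc hiT hci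
    have hψ : ham (psi k ℓ C) Ss[b] ≤ ℓ := by simpa [psi] using ham_le_length (psi k ℓ C) Ss[b]
    omega

theorem stmt7 (k ℓ m : ℕ) (hm : 1 ≤ m) (hℓ : 1 ≤ ℓ)
    (Ss : List (List Bool)) (hSs : Ss.length = m)
    (hlen : ∀ Si ∈ Ss, Si.length = ℓ)
    (T : List Bool) (hT : T = (Ss.map (gamma k)).flatten)
    (c : ℕ) (hc : c = (4 * k + 12) * ℓ + 2 * k + 4)
    (C : List Bool) (hC : C.length = c)
    (hcov : IsApproxCover k C T) :
    ∀ Si ∈ Ss, ham (psi k ℓ C) Si ≤ k :=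
  stmt7_general k ℓ Ss hlen T hT c hc C hC hcov
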